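/- A graph G is a proper veto interval (PVI) graph if and only if G is a unit veto interval (UVI) graph. -/
import Mathlib


/-- A veto interval: a closed interval `[l, r]` with a veto mark `v`, `l < v < r`. -/
structure VetoInterval where
  l : ℝ
  v : ℝ
  r : ℝ
  hlv : l < v
  hvr : v < r

/-- Two veto intervals are adjacent iff they intersect and neither contains
the veto mark of the other. -/
def VIAdj (a b : VetoInterval) : Prop :=
  (a.v < b.l ∧ b.l < a.r ∧ a.r < b.v) ∨ (b.v < a.l ∧ a.l < b.r ∧ b.r < a.v)

/-- `G` is a veto interval graph. -/
def IsVIGraph {V : Type*} (G : SimpleGraph V) : Prop :=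
  ∃ f : V → VetoInterval, ∀ a b : V, G.Adj a b ↔ VIAdj (f a) (f b)

/-- `G` is a proper veto interval (PVI) graph: it has a veto interval
representation in which no interval properly contains another. -/
def IsPVIGraph {V : Type*} (G : SimpleGraph V) : Prop :=
  ∃ f : V → VetoInterval,
    (∀ a b : V, G.Adj a b ↔ VIAdj (f a) (f b)) ∧
    (∀ x y : V, ¬ ((f x).l ≤ (f y).l ∧ (f y).r ≤ (f x).r ∧
      ((f x).l < (f y).l ∨ (f y).r < (f x).r)))

/-- `G` is a unit veto interval (UVI) graph: it has a veto interval
representation in which all intervals have the same length. -/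
def IsUVIGraph {V : Type*} (G : SimpleGraph V) : Prop :=
  ∃ f : V → VetoInterval,
    (∀ a b : V, G.Adj a b ↔ VIAdj (f a) (f b)) ∧
    (∀ a b : V, (f a).r - (f a).l = (f b).r - (f b).l)


section AuxCore
open Finset

def lvlE (P : ℕ → Option ℕ) : ℕ → ℕ → ℕ × Finset ℕ
  | _, 0 => (0, {0})
  | 0, _ + 1 => (0, {0})
  | fuel + 1, i + 1 =>
    match P (i+1) with
    | some j => ((lvlE P fuel j).1 + 1, (lvlE P fuel j).2)
    | none => ((lvlE P fuel i).1, insert (i+1) (lvlE P fuel i).2)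

section
variable (P : ℕ → Option ℕ)

def cfn (i : ℕ) : ℕ := (lvlE P i i).1
def Efn (i : ℕ) : Finset ℕ := (lvlE P i i).2

variable (hlt : ∀ i j, P i = some j → j < i)

lemma lvlE_zero (f : ℕ) : lvlE P f 0 = (0, {0}) := by cases f <;> rfl

include hlt in
lemma lvlE_irrel : ∀ i f1 f2, i ≤ f1 → i ≤ f2 → lvlE P f1 i = lvlE P f2 i := by
  intro i
  induction i using Nat.strong_induction_on with
  | _ i IH =>
    match i with
    | 0 => intro f1 f2 _ _; rw [lvlE_zero, lvlE_zero]
    | i + 1 =>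
      intro f1 f2 h1 h2
      obtain ⟨a, rfl⟩ : ∃ a, f1 = a + 1 := ⟨f1 - 1, by omega⟩
      obtain ⟨b, rfl⟩ : ∃ b, f2 = b + 1 := ⟨f2 - 1, by omega⟩
      cases hP : P (i+1) with
      | some j =>
        have hj : j < i + 1 := hlt _ _ hP
        have := IH j hj a b (by omega) (by omega)
        simp [lvlE, hP, this]
      | none =>
        have := IH i (by omega) a b (by omega) (by omega)
        simp [lvlE, hP, this]

lemma cfn_zero : cfn P 0 = 0 := rfl
lemma Efn_zero : Efn P 0 = {0} := rfl

include hlt in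
lemma cE_some {i j : ℕ} (h : P i = some j) :
    cfn P i = cfn P j + 1 ∧ Efn P i = Efn P j := by
  have hj : j < i := hlt _ _ h
  obtain ⟨i', rfl⟩ : ∃ i', i = i' + 1 := ⟨i - 1, by omega⟩
  have h1 : lvlE P (i'+1) (i'+1) = ((lvlE P i' j).1 + 1, (lvlE P i' j).2) := by
    simp [lvlE, h]
  have h2 : lvlE P i' j = lvlE P j j := lvlE_irrel P hlt j i' j (by omega) le_rfl
  constructor <;> simp [cfn, Efn, h1, h2]

omit hlt in
lemma cE_none {i : ℕ} (h : P i = none) (h0 : i ≠ 0) :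
    cfn P i = cfn P (i-1) ∧ Efn P i = insert i (Efn P (i-1)) := by
  obtain ⟨i', rfl⟩ : ∃ i', i = i' + 1 := ⟨i - 1, by omega⟩
  have h1 : lvlE P (i'+1) (i'+1) = ((lvlE P i' i').1, insert (i'+1) (lvlE P i' i').2) := by
    simp [lvlE, h]
  constructor <;> simp [cfn, Efn, h1]

end

section
variable (P : ℕ → Option ℕ) (hlt : ∀ i j, P i = some j → j < i)
  (hmono : ∀ i i' j j', P i = some j → P i' = some j' → i < i' → j < j')

variable (cfn : ℕ → ℕ) (Efn : ℕ → Finset ℕ)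
variable (cfn_zero : cfn 0 = 0) (Efn_zero : Efn 0 = {0})
variable (cE_some : ∀ {i j : ℕ}, P i = some j → cfn i = cfn j + 1 ∧ Efn i = Efn j)
variable (cE_none : ∀ {i : ℕ}, P i = none → i ≠ 0 → cfn i = cfn (i-1) ∧ Efn i = insert i (Efn (i-1)))

include hlt hmono cfn_zero cE_some cE_none in
lemma cfn_mono : ∀ t s, s ≤ t → cfn s ≤ cfn t := by
  intro t
  induction t using Nat.strong_induction_on with
  | _ t IH =>
    intro s hs
    rcases Nat.eq_or_lt_of_le hs with rfl | hst
    · exact le_rfl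
    have hstep : cfn (t-1) ≤ cfn t := by
      have ht0 : t ≠ 0 := by omega
      cases hP : P t with
      | none => exact (cE_none hP ht0).1.ge
      | some j =>
        have hj : j < t := hlt _ _ hP
        rw [(cE_some hP).1]
        -- inner: ∀ k, j ≤ k → k ≤ t-1 → cfn k ≤ cfn j + 1
        have inner : ∀ k, j ≤ k → k ≤ t - 1 → cfn k ≤ cfn j + 1 := by
          intro k
          induction k using Nat.strong_induction_on with
          | _ k IHk =>
            intro hjk hkt
            rcases Nat.eq_or_lt_of_le hjk with rfl | hjk'
            · omega
            cases hQ : P k with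
            | none =>
              have hk0 : k ≠ 0 := by omega
              rw [(cE_none hQ hk0).1]
              exact IHk (k-1) (by omega) (by omega) (by omega)
            | some j' =>
              have : j' < j := hmono k t j' j hQ hP (by omega)
              rw [(cE_some hQ).1]
              have hle : cfn j' ≤ cfn j := IH j hj j' this.le
              omega
        exact inner (t-1) (by omega) le_rfl
    calc cfn s ≤ cfn (t-1) := IH (t-1) (by omega) s (by omega)
      _ ≤ cfn t := hstep
end

section
variable (P : ℕ → Option ℕ) (hlt : ∀ i j, P i = some j → j < i)
  (hmono : ∀ i i' j j', P i = some j → P i' = some j' → i < i' → j < j')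
variable (cfn : ℕ → ℕ) (Efn : ℕ → Finset ℕ)
variable (cfn_zero : cfn 0 = 0) (Efn_zero : Efn 0 = {0})
variable (cE_some : ∀ {i j : ℕ}, P i = some j → cfn i = cfn j + 1 ∧ Efn i = Efn j)
variable (cE_none : ∀ {i : ℕ}, P i = none → i ≠ 0 → cfn i = cfn (i-1) ∧ Efn i = insert i (Efn (i-1)))
variable (cfn_mono : ∀ t s, s ≤ t → cfn s ≤ cfn t)

include hlt Efn_zero cE_some cE_none in
lemma Efn_subset : ∀ i, ∀ k ∈ Efn i, k ≤ i := by
  intro i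
  induction i using Nat.strong_induction_on with
  | _ i IH =>
    cases hP : P i with
    | some j =>
      have hj := hlt _ _ hP
      rw [(cE_some hP).2]
      intro k hk; exact (IH j hj k hk).trans hj.le
    | none =>
      rcases Nat.eq_zero_or_pos i with rfl | hi
      · rw [Efn_zero]; intro k hk; simp_all
      · rw [(cE_none hP (by omega)).2]
        intro k hk
        rcases Finset.mem_insert.mp hk with rfl | hk
        · exact le_rfl
        · exact (IH (i-1) (by omega) k hk).trans (by omega)

include hlt hmono Efn_zero cE_some cE_none cfn_mono in
lemma key_claim : ∀ n s t, s + t ≤ n → s < t → cfn s = cfn t →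
    ∃ d, d ∈ Efn t ∧ d ∉ Efn s ∧ ∀ k ∈ Efn s, k ∉ Efn t → d < k := by
  intro n
  induction n using Nat.strong_induction_on with
  | _ n IH =>
    intro s t hn hst hc
    have hsub := Efn_subset P hlt cfn Efn Efn_zero @cE_some @cE_none
    cases hPt : P t with
    | none =>
      have ht0 : t ≠ 0 := by omega
      obtain ⟨hcn, hEn⟩ := cE_none hPt ht0
      rcases Nat.eq_or_lt_of_le (Nat.le_sub_one_of_lt hst) with hs1 | hs1
      · -- s = t - 1
        refine ⟨t, ?_, ?_, ?_⟩
        · rw [hEn]; exact Finset.mem_insert_self _ _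
        · intro hmem; exact absurd (hsub s t hmem) (by omega)
        · intro k hk hkn
          exfalso; apply hkn; rw [hEn]; exact Finset.mem_insert_of_mem (hs1 ▸ hk)
      · -- s < t - 1
        obtain ⟨d, hd1, hd2, hd3⟩ := IH (n-1) (by omega) s (t-1) (by omega) (by omega)
          (by rw [hc, hcn])
        refine ⟨d, by rw [hEn]; exact Finset.mem_insert_of_mem hd1, hd2, ?_⟩
        intro k hk hkn
        exact hd3 k hk (fun h => hkn (by rw [hEn]; exact Finset.mem_insert_of_mem h))
    | some j =>
      obtain ⟨hcs', hEs'⟩ := cE_some hPt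
      have hj := hlt _ _ hPt
      have hjs : j < s := by
        by_contra h
        have := cfn_mono j s (by omega)
        omega
      cases hPs : P s with
      | some j' =>
        have hj' : j' < j := hmono s t j' j hPs hPt hst
        obtain ⟨hcs2, hEs2⟩ := cE_some hPs
        obtain ⟨d, hd1, hd2, hd3⟩ := IH (n-1) (by omega) j' j (by omega) hj' (by omega)
        refine ⟨d, by rw [hEs']; exact hd1, by rw [hEs2]; exact hd2, ?_⟩
        intro k hk hkn
        exact hd3 k (by rwa [hEs2] at hk) (by rwa [hEs'] at hkn)
      | none =>
        have hs0 : s ≠ 0 := by omega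
        obtain ⟨hcn2, hEn2⟩ := cE_none hPs hs0
        have hjs1 : j < s - 1 := by
          rcases Nat.lt_or_ge j (s-1) with h | h
          · exact h
          · exfalso
            have h1 : s - 1 ≤ j := h
            have := cfn_mono j (s-1) h1
            omega
        obtain ⟨d, hd1, hd2, hd3⟩ := IH (n-1) (by omega) (s-1) t (by omega) (by omega)
          (by rw [← hc, hcn2])
        have hdj : d ≤ j := by
          have : d ∈ Efn j := by rwa [hEs'] at hd1
          exact hsub j d this
        refine ⟨d, hd1, ?_, ?_⟩
        · rw [hEn2]
          intro hmem
          rcases Finset.mem_insert.mp hmem with rfl | hmem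
          · omega
          · exact hd2 hmem
        · intro k hk hkn
          rw [hEn2] at hk
          rcases Finset.mem_insert.mp hk with rfl | hk
          · omega
          · exact hd3 k hk hkn
end

lemma geom_half (n : ℕ) : ∑ k ∈ range n, ((2:ℝ)⁻¹)^(k+1) = 1 - (2⁻¹)^n := by
  induction n with
  | zero => simp
  | succ n IH => rw [Finset.sum_range_succ, IH]; ring

section
variable (P : ℕ → Option ℕ) (hlt : ∀ i j, P i = some j → j < i)
  (hmono : ∀ i i' j j', P i = some j → P i' = some j' → i < i' → j < j')
variable (cfn : ℕ → ℕ) (Efn : ℕ → Finset ℕ)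
variable (cfn_zero : cfn 0 = 0) (Efn_zero : Efn 0 = {0})
variable (cE_some : ∀ {i j : ℕ}, P i = some j → cfn i = cfn j + 1 ∧ Efn i = Efn j)
variable (cE_none : ∀ {i : ℕ}, P i = none → i ≠ 0 → cfn i = cfn (i-1) ∧ Efn i = insert i (Efn (i-1)))
variable (cfn_mono : ∀ t s, s ≤ t → cfn s ≤ cfn t)
variable (Efn_sub : ∀ i, ∀ k ∈ Efn i, k ≤ i)
variable (claim : ∀ s t, s < t → cfn s = cfn t →
    ∃ d, d ∈ Efn t ∧ d ∉ Efn s ∧ ∀ k ∈ Efn s, k ∉ Efn t → d < k)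

noncomputable def efn (i : ℕ) : ℝ := ∑ k ∈ Efn i, ((2:ℝ)⁻¹)^(k+1)

lemma efn_nonneg (i : ℕ) : 0 ≤ efn Efn i :=
  Finset.sum_nonneg fun k _ => by positivity

include Efn_sub in
lemma efn_lt_one (i : ℕ) : efn Efn i < 1 := by
  have h1 : efn Efn i ≤ ∑ k ∈ range (i+1), ((2:ℝ)⁻¹)^(k+1) := by
    apply Finset.sum_le_sum_of_subset_of_nonneg
    · intro k hk; exact Finset.mem_range.mpr (Nat.lt_succ_of_le (Efn_sub i k hk))
    · intro k _ _; positivity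
  rw [geom_half] at h1
  have : (0:ℝ) < (2⁻¹)^(i+1) := by positivity
  linarith

include Efn_sub claim in
lemma efn_strict {s t : ℕ} (hst : s < t) (hc : cfn s = cfn t) : efn Efn s < efn Efn t := by
  obtain ⟨d, hd1, hd2, hd3⟩ := claim s t hst hc
  set A := Efn s
  set B := Efn t
  have split : efn Efn s = ∑ k ∈ A ∩ B, ((2:ℝ)⁻¹)^(k+1) + ∑ k ∈ A \ B, ((2:ℝ)⁻¹)^(k+1) := by
    rw [Finset.sum_inter_add_sum_sdiff]; rfl
  have hins : insert d (A ∩ B) ⊆ B := by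
    intro k hk
    rcases Finset.mem_insert.mp hk with rfl | hk
    · exact hd1
    · exact (Finset.mem_inter.mp hk).2
  have hdni : d ∉ A ∩ B := fun h => hd2 (Finset.mem_inter.mp h).1
  have h2 : ∑ k ∈ A ∩ B, ((2:ℝ)⁻¹)^(k+1) + ((2:ℝ)⁻¹)^(d+1) ≤ efn Efn t := by
    have := Finset.sum_insert (f := fun k => ((2:ℝ)⁻¹)^(k+1)) hdni
    calc ∑ k ∈ A ∩ B, ((2:ℝ)⁻¹)^(k+1) + ((2:ℝ)⁻¹)^(d+1)
        = ∑ k ∈ insert d (A ∩ B), ((2:ℝ)⁻¹)^(k+1) := by rw [this]; ring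
      _ ≤ ∑ k ∈ B, ((2:ℝ)⁻¹)^(k+1) :=
          Finset.sum_le_sum_of_subset_of_nonneg hins (fun k _ _ => by positivity)
  have h3 : ∑ k ∈ A \ B, ((2:ℝ)⁻¹)^(k+1) < ((2:ℝ)⁻¹)^(d+1) := by
    have hsubIco : A \ B ⊆ Finset.Ico (d+1) (s+1) := by
      intro k hk
      obtain ⟨hkA, hkB⟩ := Finset.mem_sdiff.mp hk
      exact Finset.mem_Ico.mpr ⟨hd3 k hkA hkB, Nat.lt_succ_of_le (Efn_sub s k hkA)⟩
    have h4 : ∑ k ∈ A \ B, ((2:ℝ)⁻¹)^(k+1) ≤ ∑ k ∈ Finset.Ico (d+1) (s+1), ((2:ℝ)⁻¹)^(k+1) :=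
      Finset.sum_le_sum_of_subset_of_nonneg hsubIco (fun k _ _ => by positivity)
    rcases Nat.lt_or_ge d (s+1) with h | h
    · have h5 : ∑ k ∈ Finset.Ico (d+1) (s+1), ((2:ℝ)⁻¹)^(k+1)
          = (1 - (2⁻¹)^(s+1)) - (1 - (2⁻¹)^(d+1)) := by
        rw [Finset.sum_Ico_eq_sub _ (by omega), geom_half, geom_half]
      have : (0:ℝ) < (2⁻¹)^(s+1) := by positivity
      rw [h5] at h4
      linarith
    · have : Finset.Ico (d+1) (s+1) = ∅ := Finset.Ico_eq_empty (by omega)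
      rw [this, Finset.sum_empty] at h4
      have : (0:ℝ) < (2⁻¹)^(d+1) := by positivity
      linarith
  calc efn Efn s = ∑ k ∈ A ∩ B, ((2:ℝ)⁻¹)^(k+1) + ∑ k ∈ A \ B, ((2:ℝ)⁻¹)^(k+1) := split
    _ < ∑ k ∈ A ∩ B, ((2:ℝ)⁻¹)^(k+1) + ((2:ℝ)⁻¹)^(d+1) := by linarith
    _ ≤ efn Efn t := h2

include cfn_mono Efn_sub claim cE_some in
lemma core_exists : ∃ φ : ℕ → ℝ, StrictMono φ ∧ ∀ i j, P i = some j → φ i = φ j + 1 := by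
  refine ⟨fun i => (cfn i : ℝ) + efn Efn i, ?_, ?_⟩
  · intro s t hst
    rcases Nat.lt_or_ge (cfn s) (cfn t) with h | h
    · have h1 : efn Efn s < 1 := efn_lt_one Efn Efn_sub s
      have h2 : 0 ≤ efn Efn t := efn_nonneg Efn t
      have : (cfn s : ℝ) + 1 ≤ (cfn t : ℝ) := by exact_mod_cast h
      simp only []
      linarith
    · have hc : cfn s = cfn t := le_antisymm (cfn_mono t s hst.le) h
      have := efn_strict cfn Efn Efn_sub claim hst hc
      simp only []
      rw [hc]
      linarith
  · intro i j hP
    obtain ⟨h1, h2⟩ := cE_some hP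
    simp only [efn, h1, h2]
    push_cast
    ring
end
noncomputable section
local instance : DecidableEq ℝ := Classical.decEq ℝ

variable {V : Type*} [Fintype V]

def Sset (f : V → VetoInterval) : Finset ℝ :=
  (Finset.univ.image fun x => (f x).l) ∪ (Finset.univ.image fun x => (f x).v) ∪
    (Finset.univ.image fun x => (f x).r)

lemma memL (f : V → VetoInterval) (x : V) : (f x).l ∈ Sset f := by
  simp [Sset]
lemma memV (f : V → VetoInterval) (x : V) : (f x).v ∈ Sset f := by
  simp [Sset]
lemma memR (f : V → VetoInterval) (x : V) : (f x).r ∈ Sset f := by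
  simp [Sset]

def sig (f : V → VetoInterval) : Fin (Sset f).card ≃o {a : ℝ // a ∈ Sset f} :=
  (Sset f).orderIsoOfFin rfl

def ixf (f : V → VetoInterval) (a : ℝ) (ha : a ∈ Sset f) : ℕ :=
  ((sig f).symm ⟨a, ha⟩ : Fin (Sset f).card)

lemma ixf_lt (f : V → VetoInterval) {a b : ℝ} (ha : a ∈ Sset f) (hb : b ∈ Sset f) :
    a < b ↔ ixf f a ha < ixf f b hb := by
  rw [ixf, ixf]
  rw [← Fin.lt_iff_val_lt_val]
  rw [OrderIso.lt_iff_lt]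
  exact Iff.symm Subtype.mk_lt_mk

lemma ixf_lt_card (f : V → VetoInterval) {a : ℝ} (ha : a ∈ Sset f) :
    ixf f a ha < (Sset f).card := by
  exact Fin.isLt _

lemma sig_ixf (f : V → VetoInterval) {a : ℝ} (ha : a ∈ Sset f) :
    ((sig f ⟨ixf f a ha, ixf_lt_card f ha⟩ : {a : ℝ // a ∈ Sset f}) : ℝ) = a := by
  have h1 : (⟨ixf f a ha, ixf_lt_card f ha⟩ : Fin (Sset f).card) = (sig f).symm ⟨a, ha⟩ := rfl
  rw [h1, OrderIso.apply_symm_apply]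

def Pfun (f : V → VetoInterval) : ℕ → Option ℕ := fun i =>
  if h : ∃ x : V, ∃ hi : i < (Sset f).card,
      ((sig f ⟨i, hi⟩ : {a : ℝ // a ∈ Sset f}) : ℝ) = (f x).r then
    some (ixf f (f h.choose).l (memL f h.choose))
  else none

lemma Pfun_spec (f : V → VetoInterval) {i j : ℕ} (h : Pfun f i = some j) :
    ∃ x : V, ∃ hi : i < (Sset f).card,
      ((sig f ⟨i, hi⟩ : {a : ℝ // a ∈ Sset f}) : ℝ) = (f x).r ∧ j = ixf f (f x).l (memL f x) := by
  unfold Pfun at h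
  split at h
  case isTrue hc =>
    obtain ⟨hi, hx⟩ := hc.choose_spec
    exact ⟨hc.choose, hi, hx, (Option.some_inj.mp h).symm⟩
  case isFalse => exact absurd h (by simp)

lemma ixf_sig (f : V → VetoInterval) (i : ℕ) (hi : i < (Sset f).card) :
    ixf f ((sig f ⟨i, hi⟩ : {a : ℝ // a ∈ Sset f}) : ℝ) (sig f ⟨i, hi⟩).2 = i := by
  unfold ixf
  rw [Subtype.coe_eta, OrderIso.symm_apply_apply]

section
variable (f : V → VetoInterval)
  (hprop : ∀ x y : V, ¬ ((f x).l ≤ (f y).l ∧ (f y).r ≤ (f x).r ∧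
      ((f x).l < (f y).l ∨ (f y).r < (f x).r)))

include hprop in
lemma ltr_aux : ∀ x y : V, (f x).r < (f y).r → (f x).l < (f y).l := by
  intro x y h
  by_contra hc
  exact hprop y x ⟨not_lt.mp hc, h.le, Or.inr h⟩

include hprop in
lemma eqlr_aux : ∀ x y : V, (f x).r = (f y).r → (f x).l = (f y).l := by
  intro x y h
  rcases lt_trichotomy (f x).r (f y).r with h1 | h1 | h1
  · exact absurd h1 (by rw [h]; exact lt_irrefl _)
  · rcases lt_trichotomy (f x).l (f y).l with h2 | h2 | h2
    · exact absurd ⟨h2.le, h.ge, Or.inl h2⟩ (hprop x y)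
    · exact h2
    · exact absurd ⟨h2.le, h.le, Or.inl h2⟩ (hprop y x)
  · exact absurd h1 (by rw [h]; exact lt_irrefl _)

lemma Pfun_hlt : ∀ i j, Pfun f i = some j → j < i := by
  intro i j h
  obtain ⟨x, hi, hx, rfl⟩ := Pfun_spec f h
  have h1 : (f x).l < ((sig f ⟨i, hi⟩ : {a : ℝ // a ∈ Sset f}) : ℝ) := by
    rw [hx]; exact (f x).hlv.trans (f x).hvr
  have := (ixf_lt f (memL f x) (sig f ⟨i, hi⟩).2).mp h1
  rwa [ixf_sig f i hi] at this

include hprop in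
lemma Pfun_hmono : ∀ i i' j j', Pfun f i = some j → Pfun f i' = some j' → i < i' → j < j' := by
  intro i i' j j' h h' hii
  obtain ⟨x, hi, hx, rfl⟩ := Pfun_spec f h
  obtain ⟨x', hi', hx', rfl⟩ := Pfun_spec f h'
  have h1 : ((sig f ⟨i, hi⟩ : {a : ℝ // a ∈ Sset f}) : ℝ) <
      ((sig f ⟨i', hi'⟩ : {a : ℝ // a ∈ Sset f}) : ℝ) := by
    have : (⟨i, hi⟩ : Fin (Sset f).card) < ⟨i', hi'⟩ := hii
    exact_mod_cast (sig f).lt_iff_lt.mpr this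
  rw [hx, hx'] at h1
  have h2 : (f x).l < (f x').l := ltr_aux f hprop x x' h1
  exact (ixf_lt f (memL f x) (memL f x')).mp h2

include hprop in
lemma Pfun_eq (x : V) :
    Pfun f (ixf f (f x).r (memR f x)) = some (ixf f (f x).l (memL f x)) := by
  have hc : ∃ y : V, ∃ hi : ixf f (f x).r (memR f x) < (Sset f).card,
      ((sig f ⟨ixf f (f x).r (memR f x), hi⟩ : {a : ℝ // a ∈ Sset f}) : ℝ) = (f y).r :=
    ⟨x, ixf_lt_card f (memR f x), sig_ixf f (memR f x)⟩
  rw [Pfun, dif_pos hc]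
  obtain ⟨hi, hspec⟩ := hc.choose_spec
  have hr : (f hc.choose).r = (f x).r := by
    rw [← hspec]; exact sig_ixf f (memR f x)
  have hl : (f hc.choose).l = (f x).l := eqlr_aux f hprop _ _ hr
  simp only [hl]
end
end

end AuxCore


section Pack
variable (P : ℕ → Option ℕ) (hlt : ∀ i j, P i = some j → j < i)
  (hmono : ∀ i i' j j', P i = some j → P i' = some j' → i < i' → j < j')

include hlt hmono in
lemma core_final : ∃ φ : ℕ → ℝ, StrictMono φ ∧ ∀ i j, P i = some j → φ i = φ j + 1 := by
  have hsome : ∀ {i j : ℕ}, P i = some j → cfn P i = cfn P j + 1 ∧ Efn P i = Efn P j :=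
    fun h => cE_some P hlt h
  have hnone : ∀ {i : ℕ}, P i = none → i ≠ 0 →
      cfn P i = cfn P (i-1) ∧ Efn P i = insert i (Efn P (i-1)) :=
    fun h h0 => cE_none P h h0
  have hmon := cfn_mono P hlt hmono (cfn P) (Efn P) (cfn_zero P) hsome hnone
  have hsub := Efn_subset P hlt (cfn P) (Efn P) (Efn_zero P) hsome hnone
  exact core_exists P (cfn P) (Efn P) hsome hmon hsub
    (fun s t hst hc => key_claim P hlt hmono (cfn P) (Efn P) (Efn_zero P) hsome hnone hmon
      (s+t) s t le_rfl hst hc)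
end Pack
/-- A graph is a PVI graph iff it is a UVI graph. -/
theorem stmt_10 {V : Type*} [Fintype V] (G : SimpleGraph V) :
    IsPVIGraph G ↔ IsUVIGraph G := by
  classical
  constructor
  · rintro ⟨f, hadj, hprop⟩
    obtain ⟨φ, hφm, hφ⟩ := core_final (Pfun f) (Pfun_hlt f) (Pfun_hmono f hprop)
    have T : ∀ (u w : ℝ) (hu : u ∈ Sset f) (hw : w ∈ Sset f),
        (u < w ↔ φ (ixf f u hu) < φ (ixf f w hw)) :=
      fun u w hu hw => (ixf_lt f hu hw).trans hφm.lt_iff_lt.symm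
    refine ⟨fun x => ⟨φ (ixf f (f x).l (memL f x)), φ (ixf f (f x).v (memV f x)),
      φ (ixf f (f x).r (memR f x)),
      (T _ _ _ _).mp (f x).hlv, (T _ _ _ _).mp (f x).hvr⟩, ?_, ?_⟩
    · intro a b
      rw [hadj a b]
      exact Iff.symm (or_congr
        (and_congr (T _ _ _ _).symm (and_congr (T _ _ _ _).symm (T _ _ _ _).symm))
        (and_congr (T _ _ _ _).symm (and_congr (T _ _ _ _).symm (T _ _ _ _).symm)))
    · intro a b
      have h1 := hφ _ _ (Pfun_eq f hprop a)
      have h2 := hφ _ _ (Pfun_eq f hprop b)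
      simp only [h1, h2]
      ring
  · rintro ⟨f, hadj, hunit⟩
    refine ⟨f, hadj, ?_⟩
    rintro x y ⟨h1, h2, h3⟩
    have h4 := hunit x y
    rcases h3 with h3 | h3 <;> linarith
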